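/- Let φ : ℝ^d → ℝ be continuous and suppose its set of minimizers Z* = argmin_{z∈ℝ^d} φ(z) is nonempty. Let {z^k} ⊂ ℝ^d be an adapted random sequence, {α^k} and {β^k} nonnegative adapted random scalar sequences with Σ_{k=0}^∞ α^k < ∞ and Σ_{k=0}^∞ β^k < ∞ almost surely, and {η^k} a deterministic nonnegative sequence with Σ_{k=0}^∞ η^k = ∞. If for every z* ∈ Z* and every k ≥ 0 one has E[‖z^{k+1} − z*‖² | 𝓕^k] ≤ (1 + α^k)‖z^k − z*‖² − η^k (φ(z^k) − φ(z*)) + β^k almost surely, then almost surely the sequence {z^k} converges to some (random) point of Z*. -/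

import Mathlib

/-!
Robbins–Siegmund: with `A_k = ∏_{j<k} (1 + α_j)`, the process
`V_k / A_k + ∑_{j<k} (U_j - β_j) / A_{j+1}` is a supermartingale, bounded below by minus the
partial sums of the a.s. summable adapted sequence `β_j / A_{j+1}`; stopping its negative when
these partial sums first exceed a level `c` gives a submartingale bounded by `c`, hence convergence.
Since `A_k` converges, `V_k` converges and `∑ U_k < ∞` a.s.

Applied to `V_k = ‖z_k - z*‖²`, `U_k = η_k (φ z_k - φ z*)` for `z*` in a countable dense subset
of the minimizers, this yields a single full-measure event on which every `‖z_k - z*‖` converges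
and `∑ η_k (φ z_k - min φ) < ∞`. As `∑ η_k = ∞`, `φ z_k` comes arbitrarily close to `min φ`
infinitely often, so the bounded sequence `z_k` has a cluster point `a` that is a minimizer. For
`z*` close to `a`, the limit of `‖z_k - z*‖` equals `‖a - z*‖`, which forces `z_k → a` (Opial).
-/

open MeasureTheory Filter Topology

def prodOneAdd (a : ℕ → ℝ) (k : ℕ) : ℝ := ∏ j ∈ Finset.range k, (1 + a j)

noncomputable def robbinsSiegmundSeq (v u a b : ℕ → ℝ) (k : ℕ) : ℝ :=
  v k / prodOneAdd a k + ∑ j ∈ Finset.range k, (u j - b j) / prodOneAdd a (j + 1)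

section Deterministic
variable {a : ℕ → ℝ}

theorem prodOneAdd_succ (a : ℕ → ℝ) (k : ℕ) :
    prodOneAdd a (k + 1) = prodOneAdd a k * (1 + a k) :=
  Finset.prod_range_succ _ _

theorem one_le_prodOneAdd (ha : ∀ j, 0 ≤ a j) (k : ℕ) : 1 ≤ prodOneAdd a k :=
  Finset.one_le_prod fun j _ => le_add_of_nonneg_right (ha j)

theorem prodOneAdd_pos (ha : ∀ j, 0 ≤ a j) (k : ℕ) : 0 < prodOneAdd a k :=
  zero_lt_one.trans_le (one_le_prodOneAdd ha k)

theorem exists_tendsto_prodOneAdd (ha : Summable a) : ∃ P, Tendsto (prodOneAdd a) atTop (𝓝 P) :=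
  ⟨_, (Real.multipliable_one_add_of_summable ha).hasProd.tendsto_prod_nat⟩

theorem one_add_mul_div_prodOneAdd_succ (ha : ∀ j, 0 ≤ a j) (k : ℕ) (x : ℝ) :
    (1 + a k) * x / prodOneAdd a (k + 1) = x / prodOneAdd a k := by
  have : 0 < 1 + a k := by linarith [ha k]
  rw [prodOneAdd_succ, mul_comm (prodOneAdd a k), mul_div_mul_left _ _ this.ne']

theorem div_prodOneAdd_le (ha : ∀ j, 0 ≤ a j) {x : ℝ} (hx : 0 ≤ x) (k : ℕ) :
    x / prodOneAdd a k ≤ x :=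
  div_le_self hx (one_le_prodOneAdd ha k)

theorem robbinsSiegmundSeq_eq (v u a b : ℕ → ℝ) (k : ℕ) :
    robbinsSiegmundSeq v u a b k = v k / prodOneAdd a k +
      ∑ j ∈ Finset.range k, u j / prodOneAdd a (j + 1) -
      ∑ j ∈ Finset.range k, b j / prodOneAdd a (j + 1) := by
  simp only [robbinsSiegmundSeq, sub_div, Finset.sum_sub_distrib, add_sub_assoc]

theorem neg_robbinsSiegmundSeq_le {v u b : ℕ → ℝ} (hv : ∀ k, 0 ≤ v k) (hu : ∀ k, 0 ≤ u k)
    (ha : ∀ k, 0 ≤ a k) (n : ℕ) :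
    -robbinsSiegmundSeq v u a b n ≤ ∑ j ∈ Finset.range n, b j / prodOneAdd a (j + 1) := by
  have hvn : 0 ≤ v n / prodOneAdd a n := div_nonneg (hv n) (prodOneAdd_pos ha n).le
  have hun : 0 ≤ ∑ j ∈ Finset.range n, u j / prodOneAdd a (j + 1) :=
    Finset.sum_nonneg fun j _ => div_nonneg (hu j) (prodOneAdd_pos ha _).le
  linarith [robbinsSiegmundSeq_eq v u a b n]

theorem tendsto_and_summable_of_tendsto_robbinsSiegmundSeq {v u b : ℕ → ℝ}
    (hv : ∀ k, 0 ≤ v k) (hu : ∀ k, 0 ≤ u k) (ha0 : ∀ k, 0 ≤ a k) (ha : Summable a)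
    (hb0 : ∀ k, 0 ≤ b k) (hb : Summable b) {L : ℝ}
    (hL : Tendsto (robbinsSiegmundSeq v u a b) atTop (𝓝 L)) :
    (∃ L, Tendsto v atTop (𝓝 L)) ∧ Summable u := by
  obtain ⟨P, hP⟩ := exists_tendsto_prodOneAdd ha
  set g : ℕ → ℝ := fun j => u j / prodOneAdd a (j + 1)
  set c : ℕ → ℝ := fun j => b j / prodOneAdd a (j + 1)
  have hg0 : ∀ j, 0 ≤ g j := fun j => div_nonneg (hu j) (prodOneAdd_pos ha0 _).le
  have hc : Summable c := hb.of_nonneg_of_le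
    (fun j => div_nonneg (hb0 j) (prodOneAdd_pos ha0 _).le)
    fun j => div_prodOneAdd_le ha0 (hb0 j) _
  have hg : Summable g := by
    obtain ⟨B, hB⟩ := hL.bddAbove_range
    refine summable_of_sum_range_le hg0 (c := B + ∑' j, c j) fun n => ?_
    have hvn : 0 ≤ v n / prodOneAdd a n := div_nonneg (hv n) (prodOneAdd_pos ha0 n).le
    have hcn : ∑ j ∈ Finset.range n, c j ≤ ∑' j, c j :=
      hc.sum_le_tsum _ fun j _ => div_nonneg (hb0 j) (prodOneAdd_pos ha0 _).le
    linarith [robbinsSiegmundSeq_eq v u a b n, hB ⟨n, rfl⟩]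
  have hvA : Tendsto (fun k => v k / prodOneAdd a k) atTop (𝓝 (L - ∑' j, g j + ∑' j, c j)) := by
    refine ((hL.sub hg.hasSum.tendsto_sum_nat).add hc.hasSum.tendsto_sum_nat).congr fun k => ?_
    rw [robbinsSiegmundSeq_eq]; ring
  refine ⟨⟨_, (hvA.mul hP).congr fun k => div_mul_cancel₀ _ (prodOneAdd_pos ha0 k).ne'⟩, ?_⟩
  obtain ⟨C, hC⟩ := hP.bddAbove_range
  refine (hg.mul_left C).of_nonneg_of_le hu fun j => ?_
  calc u j = prodOneAdd a (j + 1) * g j := (mul_div_cancel₀ _ (prodOneAdd_pos ha0 _).ne').symm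
    _ ≤ C * g j := mul_le_mul_of_nonneg_right (hC ⟨j + 1, rfl⟩) (hg0 j)

end Deterministic

namespace MeasureTheory
variable {Ω : Type*} {m0 : MeasurableSpace Ω} {μ : Measure Ω} {ℱ : Filtration ℕ m0}

theorem Submartingale.exists_ae_tendsto_of_le [IsFiniteMeasure μ] {f : ℕ → Ω → ℝ}
    (hf : Submartingale f ℱ μ) {c : ℝ} (hfc : ∀ n ω, f n ω ≤ c) :
    ∀ᵐ ω ∂μ, ∃ L, Tendsto (fun n => f n ω) atTop (𝓝 L) := by
  refine hf.exists_ae_tendsto_of_bdd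
    (R := (2 * |c| * μ.real Set.univ - ∫ ω, f 0 ω ∂μ).toNNReal) fun n => ?_
  have hint := hf.integrable n
  have habs : ∀ ω, |f n ω| ≤ 2 * |c| - f n ω := fun ω => by
    have := hfc n ω
    cases abs_cases (f n ω) <;> cases abs_cases c <;> linarith
  have hmono : ∫ ω, f 0 ω ∂μ ≤ ∫ ω, f n ω ∂μ := by
    simpa using hf.setIntegral_le (Nat.zero_le n) MeasurableSet.univ
  rw [eLpNorm_one_eq_lintegral_enorm, ← ofReal_integral_norm_eq_lintegral_enorm hint]
  refine ENNReal.ofReal_le_ofReal ?_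
  calc ∫ ω, ‖f n ω‖ ∂μ ≤ ∫ ω, (2 * |c| - f n ω) ∂μ :=
        integral_mono hint.norm ((integrable_const _).sub hint) habs
    _ = 2 * |c| * μ.real Set.univ - ∫ ω, f n ω ∂μ := by
        rw [integral_sub (integrable_const _) hint, integral_const, smul_eq_mul, mul_comm]
    _ ≤ 2 * |c| * μ.real Set.univ - ∫ ω, f 0 ω ∂μ := by linarith

theorem Supermartingale.exists_ae_tendsto_of_neg_le_sum [IsFiniteMeasure μ] {X b : ℕ → Ω → ℝ}
    (hX : Supermartingale X ℱ μ) (hb : Adapted ℱ b)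
    (hb_sum : ∀ᵐ ω ∂μ, Summable fun n => b n ω)
    (hXb : ∀ n ω, -X n ω ≤ ∑ i ∈ Finset.range n, b i ω) :
    ∀ᵐ ω ∂μ, ∃ L, Tendsto (fun n => X n ω) atTop (𝓝 L) := by
  set S : ℕ → Ω → ℝ := fun n ω => ∑ i ∈ Finset.range (n + 1), b i ω
  have hS : Adapted ℱ S := fun n =>
    Finset.measurable_sum _ fun i hi =>
      hb.measurable_le (Nat.lt_succ_iff.mp (Finset.mem_range.mp hi))
  -- Stopped when the partial sums of `b` first reach `c`, `-X` stays below `c`.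
  have hstopped : ∀ c : ℕ, ∀ᵐ ω ∂μ,
      ∃ L, Tendsto (fun n => stoppedProcess (-X) (leastGE S c) n ω) atTop (𝓝 L) := by
    intro c
    have hτ : IsStoppingTime ℱ (leastGE S (c : ℝ)) :=
      hS.isStoppingTime_hittingAfter measurableSet_Ici
    have hsum_le : ∀ ω (m : ℕ), (m : WithTop ℕ) ≤ leastGE S c ω →
        ∑ i ∈ Finset.range m, b i ω ≤ c := by
      rintro ω (_ | j) hj
      · simp
      · have := notMem_of_lt_hittingAfter ((WithTop.coe_lt_coe.mpr j.lt_succ_self).trans_le hj)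
          (Nat.zero_le j)
        simpa [S] using (not_le.mp this).le
    refine (hX.neg.stoppedProcess hτ).exists_ae_tendsto_of_le (c := c) fun n ω => ?_
    rcases le_total (WithTop.some n) (leastGE S c ω) with h | h
    · rw [stoppedProcess_eq_of_le h]
      exact (hXb n ω).trans (hsum_le ω n h)
    · obtain ⟨m, hm⟩ := WithTop.ne_top_iff_exists.mp (ne_top_of_le_ne_top WithTop.coe_ne_top h)
      rw [stoppedProcess_eq_of_ge h, ← hm]
      exact (hXb m ω).trans (hsum_le ω m hm.le)
  filter_upwards [ae_all_iff.mpr hstopped, hb_sum] with ω hω hbω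
  obtain ⟨c, hc⟩ : ∃ c : ℕ, ∀ n, S n ω < c := by
    obtain ⟨B, hB⟩ := (hbω.hasSum.tendsto_sum_nat.comp (tendsto_add_atTop_nat 1)).bddAbove_range
    obtain ⟨c, hc⟩ := exists_nat_gt B
    exact ⟨c, fun n => (hB ⟨n, rfl⟩).trans_lt hc⟩
  have hτ : leastGE S c ω = ⊤ := hittingAfter_eq_top_iff.mpr fun n _ => not_le.mpr (hc n)
  obtain ⟨L, hL⟩ := hω c
  have hstop : ∀ n, stoppedProcess (-X) (leastGE S c) n ω = -X n ω := fun n =>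
    stoppedProcess_eq_of_le (hτ ▸ le_top)
  exact ⟨-L, by simpa [hstop] using hL.neg⟩

theorem measurable_prodOneAdd {m : MeasurableSpace Ω} {α : ℕ → Ω → ℝ} {k : ℕ}
    (hα : ∀ j < k, Measurable[m] (α j)) : Measurable[m] fun ω => prodOneAdd (α · ω) k :=
  Finset.measurable_prod _ fun j hj => measurable_const.add (hα j (Finset.mem_range.mp hj))

theorem Integrable.div_of_one_le {f g : Ω → ℝ} (hf : Integrable f μ) (hg : Measurable g)
    (hg1 : ∀ ω, 1 ≤ g ω) : Integrable (fun ω => f ω / g ω) μ := by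
  simp only [div_eq_mul_inv]
  refine hf.mul_bdd (c := 1) hg.inv.aestronglyMeasurable (Eventually.of_forall fun ω => ?_)
  rw [norm_inv, Real.norm_of_nonneg (zero_le_one.trans (hg1 ω))]
  exact inv_le_one_of_one_le₀ (hg1 ω)

theorem measurable_sum_div_prodOneAdd {U α : ℕ → Ω → ℝ} (hU : Adapted ℱ U) (hα : Adapted ℱ α)
    {n k : ℕ} (hn : n ≤ k + 1) :
    Measurable[ℱ k] fun ω => ∑ j ∈ Finset.range n, U j ω / prodOneAdd (α · ω) (j + 1) := by
  refine Finset.measurable_sum _ fun j hj => ?_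
  have hj : j < n := Finset.mem_range.mp hj
  exact (hU.measurable_le (by omega)).div
    (measurable_prodOneAdd fun i hi => hα.measurable_le (by omega))

theorem Adapted.robbinsSiegmundSeq {V U α β : ℕ → Ω → ℝ} (hV : Adapted ℱ V) (hU : Adapted ℱ U)
    (hα : Adapted ℱ α) (hβ : Adapted ℱ β) :
    Adapted ℱ fun k ω => robbinsSiegmundSeq (V · ω) (U · ω) (α · ω) (β · ω) k := fun k =>
  ((hV k).div (measurable_prodOneAdd fun _ hj => hα.measurable_le hj.le)).add
    (measurable_sum_div_prodOneAdd (hU.sub hβ) hα k.le_succ)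

theorem integrable_sum_div_prodOneAdd {V U α β : ℕ → Ω → ℝ} (hU : ∀ k, Measurable (U k))
    (hα : ∀ k, Measurable (α k)) (hV_int : ∀ k, Integrable (V k) μ)
    (hβ_int : ∀ k, Integrable (β k) μ) (hV0 : ∀ k ω, 0 ≤ V k ω) (hU0 : ∀ k ω, 0 ≤ U k ω)
    (hα0 : ∀ k ω, 0 ≤ α k ω) (hU_le : ∀ k, ∀ᵐ ω ∂μ, U k ω ≤ (1 + α k ω) * V k ω + β k ω)
    (n : ℕ) :
    Integrable (fun ω => ∑ j ∈ Finset.range n, (U j ω - β j ω) / prodOneAdd (α · ω) (j + 1)) μ := by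
  set A : ℕ → Ω → ℝ := fun k ω => prodOneAdd (α · ω) k
  have hA1 : ∀ k ω, 1 ≤ A k ω := fun k ω => one_le_prodOneAdd (hα0 · ω) k
  have hA : ∀ k, Measurable (A k) := fun k => measurable_prodOneAdd fun j _ => hα j
  have hUA_int : ∀ k, Integrable (fun ω => U k ω / A (k + 1) ω) μ := fun k => by
    refine ((hV_int k).add (hβ_int k).abs).mono' ((hU k).div (hA _)).aestronglyMeasurable ?_
    filter_upwards [hU_le k] with ω hω
    rw [Real.norm_of_nonneg (div_nonneg (hU0 k ω) (zero_le_one.trans (hA1 _ ω)))]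
    calc U k ω / A (k + 1) ω ≤ ((1 + α k ω) * V k ω + β k ω) / A (k + 1) ω := by
          gcongr; exact zero_le_one.trans (hA1 _ ω)
      _ = V k ω / A k ω + β k ω / A (k + 1) ω := by
          rw [add_div, one_add_mul_div_prodOneAdd_succ (hα0 · ω)]
      _ ≤ V k ω + |β k ω| := by
          gcongr
          · exact div_le_self (hV0 k ω) (hA1 k ω)
          · refine (le_abs_self _).trans ?_
            rw [abs_div, abs_of_pos (zero_lt_one.trans_le (hA1 _ ω))]
            exact div_le_self (abs_nonneg _) (hA1 _ ω)
  refine integrable_finsetSum _ fun j _ => ?_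
  simp_rw [sub_div]
  exact (hUA_int j).sub ((hβ_int j).div_of_one_le (hA _) (hA1 _))

theorem supermartingale_robbinsSiegmundSeq [IsFiniteMeasure μ] {V U α β : ℕ → Ω → ℝ}
    (hV : Adapted ℱ V) (hU : Adapted ℱ U) (hα : Adapted ℱ α) (hβ : Adapted ℱ β)
    (hV_int : ∀ k, Integrable (V k) μ) (hβ_int : ∀ k, Integrable (β k) μ)
    (hV0 : ∀ k ω, 0 ≤ V k ω) (hU0 : ∀ k ω, 0 ≤ U k ω) (hα0 : ∀ k ω, 0 ≤ α k ω)
    (hrec : ∀ k, ∀ᵐ ω ∂μ, μ[V (k + 1) | ℱ k] ω ≤ (1 + α k ω) * V k ω - U k ω + β k ω) :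
    Supermartingale (fun k ω => robbinsSiegmundSeq (V · ω) (U · ω) (α · ω) (β · ω) k) ℱ μ := by
  set A : ℕ → Ω → ℝ := fun k ω => prodOneAdd (α · ω) k
  have hA1 : ∀ k ω, 1 ≤ A k ω := fun k ω => one_le_prodOneAdd (hα0 · ω) k
  have hA : ∀ k, Measurable (A k) := fun k => measurable_prodOneAdd fun _ _ => hα.measurable
  have hU_le : ∀ k, ∀ᵐ ω ∂μ, U k ω ≤ (1 + α k ω) * V k ω + β k ω := fun k => by
    filter_upwards [condExp_nonneg (m := ℱ k) (Eventually.of_forall (hV0 (k + 1))), hrec k]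
      with ω (h0 : 0 ≤ _) h
    linarith
  have hS_int := integrable_sum_div_prodOneAdd (fun k => hU.measurable) (fun k => hα.measurable)
    hV_int hβ_int hV0 hU0 hα0 hU_le
  refine supermartingale_nat (hV.robbinsSiegmundSeq hU hα hβ).stronglyAdapted
    (fun k => ((hV_int k).div_of_one_le (hA k) (hA1 k)).add (hS_int k)) fun k => ?_
  set R : Ω → ℝ := fun ω => ∑ j ∈ Finset.range (k + 1), (U j ω - β j ω) / A (j + 1) ω
  have hR : StronglyMeasurable[ℱ k] R :=
    (measurable_sum_div_prodOneAdd (hU.sub hβ) hα le_rfl).stronglyMeasurable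
  have hAinv : StronglyMeasurable[ℱ k] fun ω => (A (k + 1) ω)⁻¹ :=
    (measurable_prodOneAdd fun j hj => hα.measurable_le (Nat.lt_succ_iff.mp hj)).inv
      |>.stronglyMeasurable
  have hAV_int : Integrable ((fun ω => (A (k + 1) ω)⁻¹) * V (k + 1)) μ := by
    have := (hV_int (k + 1)).div_of_one_le (hA (k + 1)) (hA1 (k + 1))
    simp only [div_eq_inv_mul] at this
    exact this
  have hsplit : (fun ω => robbinsSiegmundSeq (V · ω) (U · ω) (α · ω) (β · ω) (k + 1)) =
      (fun ω => (A (k + 1) ω)⁻¹) * V (k + 1) + R := by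
    ext ω; simp only [robbinsSiegmundSeq, div_eq_inv_mul, Pi.add_apply, Pi.mul_apply, R, A]
  rw [hsplit]
  filter_upwards [condExp_add hAV_int (hS_int (k + 1)) (ℱ k),
    condExp_mul_of_stronglyMeasurable_left hAinv hAV_int (hV_int (k + 1)), hrec k]
    with ω hadd hmul hω
  rw [hadd, Pi.add_apply, hmul, condExp_of_stronglyMeasurable (ℱ.le k) hR (hS_int (k + 1))]
  have hAinv0 : 0 ≤ (A (k + 1) ω)⁻¹ := inv_nonneg.mpr (zero_le_one.trans (hA1 _ ω))
  have hstep : (1 + α k ω) * V k ω / A (k + 1) ω = V k ω / A k ω :=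
    one_add_mul_div_prodOneAdd_succ (hα0 · ω) k _
  have hdrift : (A (k + 1) ω)⁻¹ * ((1 + α k ω) * V k ω - U k ω + β k ω) =
      V k ω / A k ω - (U k ω - β k ω) / A (k + 1) ω := by
    rw [← hstep]; ring
  simp only [Pi.mul_apply, R, Finset.sum_range_succ, robbinsSiegmundSeq]
  linarith [mul_le_mul_of_nonneg_left hω hAinv0]

theorem ae_tendsto_and_summable_of_robbinsSiegmund_of_nonneg [IsFiniteMeasure μ]
    {V U α β : ℕ → Ω → ℝ} (hV : Adapted ℱ V) (hU : Adapted ℱ U) (hα : Adapted ℱ α)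
    (hβ : Adapted ℱ β) (hV_int : ∀ k, Integrable (V k) μ) (hβ_int : ∀ k, Integrable (β k) μ)
    (hV0 : ∀ k ω, 0 ≤ V k ω) (hU0 : ∀ k ω, 0 ≤ U k ω) (hα0 : ∀ k ω, 0 ≤ α k ω)
    (hβ0 : ∀ k ω, 0 ≤ β k ω) (hα_sum : ∀ᵐ ω ∂μ, Summable fun k => α k ω)
    (hβ_sum : ∀ᵐ ω ∂μ, Summable fun k => β k ω)
    (hrec : ∀ k, ∀ᵐ ω ∂μ, μ[V (k + 1) | ℱ k] ω ≤ (1 + α k ω) * V k ω - U k ω + β k ω) :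
    ∀ᵐ ω ∂μ, (∃ L, Tendsto (fun k => V k ω) atTop (𝓝 L)) ∧ Summable fun k => U k ω := by
  have hb : Adapted ℱ fun j ω => β j ω / prodOneAdd (α · ω) (j + 1) := fun j =>
    (hβ j).div (measurable_prodOneAdd fun i hi => hα.measurable_le (Nat.lt_succ_iff.mp hi))
  have hb_sum : ∀ᵐ ω ∂μ, Summable fun j => β j ω / prodOneAdd (α · ω) (j + 1) := by
    filter_upwards [hβ_sum] with ω hω
    exact hω.of_nonneg_of_le (fun j => div_nonneg (hβ0 j ω) (prodOneAdd_pos (hα0 · ω) _).le)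
      fun j => div_prodOneAdd_le (hα0 · ω) (hβ0 j ω) _
  have hX := (supermartingale_robbinsSiegmundSeq hV hU hα hβ hV_int hβ_int hV0 hU0 hα0
    hrec).exists_ae_tendsto_of_neg_le_sum hb hb_sum
    fun n ω => neg_robbinsSiegmundSeq_le (hV0 · ω) (hU0 · ω) (hα0 · ω) n
  filter_upwards [hX, hα_sum, hβ_sum] with ω ⟨L, hL⟩ hαω hβω
  exact tendsto_and_summable_of_tendsto_robbinsSiegmundSeq (hV0 · ω) (hU0 · ω) (hα0 · ω) hαω
    (hβ0 · ω) hβω hL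

theorem ae_tendsto_and_summable_of_robbinsSiegmund [IsFiniteMeasure μ]
    {V U α β : ℕ → Ω → ℝ} (hV : Adapted ℱ V) (hU : Adapted ℱ U) (hα : Adapted ℱ α)
    (hβ : Adapted ℱ β) (hV_int : ∀ k, Integrable (V k) μ) (hβ_int : ∀ k, Integrable (β k) μ)
    (hV0 : ∀ k ω, 0 ≤ V k ω) (hU0 : ∀ k ω, 0 ≤ U k ω) (hα0 : ∀ k, ∀ᵐ ω ∂μ, 0 ≤ α k ω)
    (hβ0 : ∀ k, ∀ᵐ ω ∂μ, 0 ≤ β k ω) (hα_sum : ∀ᵐ ω ∂μ, Summable fun k => α k ω)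
    (hβ_sum : ∀ᵐ ω ∂μ, Summable fun k => β k ω)
    (hrec : ∀ k, ∀ᵐ ω ∂μ, μ[V (k + 1) | ℱ k] ω ≤ (1 + α k ω) * V k ω - U k ω + β k ω) :
    ∀ᵐ ω ∂μ, (∃ L, Tendsto (fun k => V k ω) atTop (𝓝 L)) ∧ Summable fun k => U k ω := by
  refine ae_tendsto_and_summable_of_robbinsSiegmund_of_nonneg (α := fun k ω => max (α k ω) 0)
    (β := fun k ω => max (β k ω) 0) hV hU (fun k => (hα k).max measurable_const)
    (fun k => (hβ k).max measurable_const) hV_int (fun k => (hβ_int k).pos_part) hV0 hU0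
    (fun _ _ => le_max_right _ _) (fun _ _ => le_max_right _ _) ?_ ?_ fun k => ?_
  · filter_upwards [hα_sum, ae_all_iff.mpr hα0] with ω hω h0
    exact hω.congr fun k => (max_eq_left (h0 k)).symm
  · filter_upwards [hβ_sum, ae_all_iff.mpr hβ0] with ω hω h0
    exact hω.congr fun k => (max_eq_left (h0 k)).symm
  · filter_upwards [hrec k, hα0 k, hβ0 k] with ω hω hα0ω hβ0ω
    rwa [max_eq_left hα0ω, max_eq_left hβ0ω]

end MeasureTheory

theorem frequently_lt_of_summable_mul {η D : ℕ → ℝ} (hη : ∀ k, 0 ≤ η k) (hη_div : ¬ Summable η)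
    (hsum : Summable fun k => η k * D k) {ε : ℝ} (hε : 0 < ε) :
    ∃ᶠ k in atTop, D k < ε := by
  by_contra h
  obtain ⟨N, hN⟩ := eventually_atTop.mp (not_frequently.mp h)
  refine hη_div ((summable_nat_add_iff N).mp ?_)
  refine Summable.of_nonneg_of_le (fun k => hη _) (fun k => ?_)
    (((summable_nat_add_iff N).mpr hsum).mul_left ε⁻¹)
  have hD : ε ≤ D (k + N) := not_lt.mp (hN _ (Nat.le_add_left N k))
  calc η (k + N) = ε⁻¹ * (η (k + N) * ε) := by field_simp
    _ ≤ ε⁻¹ * (η (k + N) * D (k + N)) := by gcongr; exact hη _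

theorem MapClusterPt.eq_of_tendsto {X ι : Type*} [TopologicalSpace X] [T2Space X] {F : Filter ι}
    {u : ι → X} {a b : X} (ha : MapClusterPt a F u) (hb : Tendsto u F (𝓝 b)) : a = b :=
  eq_of_nhds_neBot (ha.clusterPt.mono hb)

theorem exists_mapClusterPt_le_of_frequently_lt {E : Type*} [PseudoMetricSpace E] [ProperSpace E]
    {φ : E → ℝ} (hφ : Continuous φ) {x : ℕ → E} (hx : Bornology.IsBounded (Set.range x)) {m : ℝ}
    (hfreq : ∀ ε > 0, ∃ᶠ k in atTop, φ (x k) < m + ε) :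
    ∃ a, φ a ≤ m ∧ MapClusterPt a atTop x := by
  obtain ⟨ψ, hψ, hψm⟩ := extraction_forall_of_frequently fun n : ℕ =>
    hfreq (1 / ((n : ℝ) + 1)) Nat.one_div_pos_of_nat
  obtain ⟨a, -, ρ, hρ, hlim⟩ := tendsto_subseq_of_bounded hx fun n => Set.mem_range_self (ψ n)
  refine ⟨a, ?_, hlim.mapClusterPt.of_comp (hψ.comp hρ).tendsto_atTop⟩
  have hbound : Tendsto (fun n => m + 1 / ((ρ n : ℝ) + 1)) atTop (𝓝 m) := by
    simpa using (tendsto_one_div_add_atTop_nhds_zero_nat.comp hρ.tendsto_atTop).const_add m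
  exact le_of_tendsto_of_tendsto' ((hφ.tendsto a).comp hlim) hbound fun n => (hψm (ρ n)).le

theorem tendsto_of_mapClusterPt_of_tendsto_dist {E : Type*} [PseudoMetricSpace E] {x : ℕ → E}
    {T : Set E} {a : E} (ha : a ∈ closure T) (hclust : MapClusterPt a atTop x)
    (hdist : ∀ t ∈ T, ∃ L, Tendsto (fun k => dist (x k) t) atTop (𝓝 L)) :
    Tendsto x atTop (𝓝 a) := by
  refine Metric.tendsto_atTop.mpr fun ε hε => ?_
  obtain ⟨t, htT, hat⟩ := Metric.mem_closure_iff.mp ha (ε / 2) (by positivity)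
  obtain ⟨L, hL⟩ := hdist t htT
  have hLa : dist a t = L :=
    (hclust.continuousAt_comp (continuous_id.dist continuous_const).continuousAt).eq_of_tendsto hL
  obtain ⟨N, hN⟩ := eventually_atTop.mp (hL.eventually_lt_const (hLa ▸ hat))
  exact ⟨N, fun k hk => by linarith [dist_triangle_right (x k) a t, hN k hk]⟩

theorem exists_tendsto_mem_argmin {E : Type*} [PseudoMetricSpace E] [ProperSpace E]
    {φ : E → ℝ} (hφ : Continuous φ) {T : Set E} (hT : {z | ∀ w, φ z ≤ φ w} ⊆ closure T)
    {z₀ : E} (hz₀ : ∀ w, φ z₀ ≤ φ w) {x : ℕ → E} {η : ℕ → ℝ} (hη : ∀ k, 0 ≤ η k)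
    (hη_div : ¬ Summable η) (hdist : ∀ t ∈ T, ∃ L, Tendsto (fun k => dist (x k) t) atTop (𝓝 L))
    (hsum : Summable fun k => η k * (φ (x k) - φ z₀)) :
    ∃ a ∈ {z | ∀ w, φ z ≤ φ w}, Tendsto x atTop (𝓝 a) := by
  obtain ⟨t, ht⟩ : T.Nonempty := closure_nonempty_iff.mp ⟨z₀, hT hz₀⟩
  obtain ⟨L, hL⟩ := hdist t ht
  obtain ⟨r, hr⟩ := hL.bddAbove_range
  have hbdd : Bornology.IsBounded (Set.range x) :=
    Metric.isBounded_closedBall.subset (Set.range_subset_iff.mpr fun k => hr ⟨k, rfl⟩)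
  obtain ⟨a, ha, hclust⟩ := exists_mapClusterPt_le_of_frequently_lt hφ hbdd fun ε hε =>
    (frequently_lt_of_summable_mul hη hη_div hsum hε).mono fun k hk => by linarith
  have haZ : ∀ w, φ a ≤ φ w := fun w => ha.trans (hz₀ w)
  exact ⟨a, haZ, tendsto_of_mapClusterPt_of_tendsto_dist (hT haZ) hclust hdist⟩

theorem stmt1_general {d : ℕ}
    {Ω : Type*} {m0 : MeasurableSpace Ω} {μ : Measure Ω} [IsProbabilityMeasure μ]
    (𝓕 : Filtration ℕ m0)
    (φ : EuclideanSpace ℝ (Fin d) → ℝ) (hφ : Continuous φ)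
    (Zs : Set (EuclideanSpace ℝ (Fin d)))
    (hZs : Zs = {z | ∀ w, φ z ≤ φ w}) (hZne : Zs.Nonempty)
    (z : ℕ → Ω → EuclideanSpace ℝ (Fin d)) (hz_adapted : Adapted 𝓕 z)
    (α β : ℕ → Ω → ℝ)
    (hα_adapted : Adapted 𝓕 α) (hβ_adapted : Adapted 𝓕 β)
    (hβ_int : ∀ k, Integrable (β k) μ)
    (hz_int : ∀ zs ∈ Zs, ∀ k, Integrable (fun ω => ‖z k ω - zs‖ ^ 2) μ)
    (hα_nonneg : ∀ k, ∀ᵐ ω ∂μ, 0 ≤ α k ω)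
    (hβ_nonneg : ∀ k, ∀ᵐ ω ∂μ, 0 ≤ β k ω)
    (hα_sum : ∀ᵐ ω ∂μ, Summable (fun k => α k ω))
    (hβ_sum : ∀ᵐ ω ∂μ, Summable (fun k => β k ω))
    (η : ℕ → ℝ) (hη_nonneg : ∀ k, 0 ≤ η k) (hη_div : ¬ Summable η)
    (hrec : ∀ zs ∈ Zs, ∀ k, ∀ᵐ ω ∂μ,
      (μ[(fun ω' => ‖z (k+1) ω' - zs‖ ^ 2) | 𝓕 k]) ω ≤
        (1 + α k ω) * ‖z k ω - zs‖ ^ 2 - η k * (φ (z k ω) - φ zs) + β k ω) :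
    ∀ᵐ ω ∂μ, ∃ zs ∈ Zs, Tendsto (fun k => z k ω) atTop (𝓝 zs) := by
  subst hZs
  obtain ⟨z₀, hz₀⟩ := hZne
  obtain ⟨T, hTZ, hTc, hTd⟩ := (TopologicalSpace.IsSeparable.of_separableSpace
    {z | ∀ w, φ z ≤ φ w}).exists_countable_dense_subset
  have hrs : ∀ zs ∈ {z | ∀ w, φ z ≤ φ w}, ∀ᵐ ω ∂μ,
      (∃ L, Tendsto (fun k => ‖z k ω - zs‖ ^ 2) atTop (𝓝 L)) ∧
        Summable fun k => η k * (φ (z k ω) - φ zs) := fun zs hzs =>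
    ae_tendsto_and_summable_of_robbinsSiegmund
      (fun k => ((continuous_id.sub continuous_const).norm.pow 2).measurable.comp (hz_adapted k))
      (fun k => (continuous_const.mul (hφ.sub continuous_const)).measurable.comp (hz_adapted k))
      hα_adapted hβ_adapted (hz_int zs hzs) hβ_int (fun _ _ => by positivity)
      (fun k ω => mul_nonneg (hη_nonneg k) (sub_nonneg.mpr (hzs _)))
      hα_nonneg hβ_nonneg hα_sum hβ_sum (hrec zs hzs)
  filter_upwards [(ae_ball_iff (hTc.insert z₀)).mpr fun zs hzs =>
    hrs zs (Set.insert_subset hz₀ hTZ hzs)] with ω hω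
  refine exists_tendsto_mem_argmin hφ hTd hz₀ hη_nonneg hη_div (fun t ht => ?_)
    (hω z₀ (Set.mem_insert _ _)).2
  obtain ⟨L, hL⟩ := (hω t (Set.mem_insert_of_mem _ ht)).1
  exact ⟨√L, by simpa [dist_eq_norm, Real.sqrt_sq (norm_nonneg _)] using hL.sqrt⟩

/-- Lemma 3 of the paper: a stochastic sequence satisfying a Robbins–Siegmund type
recursion with respect to every minimizer of a continuous function `φ` with nonempty
minimizer set converges almost surely to some (random) minimizer. -/
theorem stmt1 {d : ℕ}
    {Ω : Type*} {m0 : MeasurableSpace Ω} {μ : Measure Ω} [IsProbabilityMeasure μ]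
    (𝓕 : Filtration ℕ m0)
    (φ : EuclideanSpace ℝ (Fin d) → ℝ) (hφ : Continuous φ)
    (Zs : Set (EuclideanSpace ℝ (Fin d)))
    (hZs : Zs = {z | ∀ w, φ z ≤ φ w}) (hZne : Zs.Nonempty)
    (z : ℕ → Ω → EuclideanSpace ℝ (Fin d)) (hz_adapted : Adapted 𝓕 z)
    (α β : ℕ → Ω → ℝ)
    (hα_adapted : Adapted 𝓕 α) (hβ_adapted : Adapted 𝓕 β)
    (hα_int : ∀ k, Integrable (α k) μ) (hβ_int : ∀ k, Integrable (β k) μ)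
    (hz_int : ∀ zs ∈ Zs, ∀ k, Integrable (fun ω => ‖z k ω - zs‖ ^ 2) μ)
    (hα_nonneg : ∀ k, ∀ᵐ ω ∂μ, 0 ≤ α k ω)
    (hβ_nonneg : ∀ k, ∀ᵐ ω ∂μ, 0 ≤ β k ω)
    (hα_sum : ∀ᵐ ω ∂μ, Summable (fun k => α k ω))
    (hβ_sum : ∀ᵐ ω ∂μ, Summable (fun k => β k ω))
    (η : ℕ → ℝ) (hη_nonneg : ∀ k, 0 ≤ η k) (hη_div : ¬ Summable η)
    (hrec : ∀ zs ∈ Zs, ∀ k, ∀ᵐ ω ∂μ,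
      (μ[(fun ω' => ‖z (k+1) ω' - zs‖ ^ 2) | 𝓕 k]) ω ≤
        (1 + α k ω) * ‖z k ω - zs‖ ^ 2 - η k * (φ (z k ω) - φ zs) + β k ω) :
    ∀ᵐ ω ∂μ, ∃ zs ∈ Zs, Tendsto (fun k => z k ω) atTop (𝓝 zs) :=
  stmt1_general 𝓕 φ hφ Zs hZs hZne z hz_adapted α β hα_adapted hβ_adapted hβ_int hz_int hα_nonneg
    hβ_nonneg hα_sum hβ_sum η hη_nonneg hη_div hrec
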